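/- arXiv:2205.09718 — 7 statements merged into one kernel-verified Lean document; each statement's English description precedes it below -/
import Mathlib

section
/- If X is a metric space, A ⊆ X is a nonempty closed subset, and X \ A (with the restricted metric) is a discrete space, then for any two distinct persistence diagrams σ, τ in D_∞(X,A) the bottleneck distance satisfies d_∞(σ,τ) > 0. -/
open scoped ENNReal
open Filter Metric Set

/-- The bottleneck (pre)distance between two `ℕ`-indexed representatives of persistence
diagrams on the metric pair `(X, A)`: the infimum, over countable multisets `α`, `β` of points
of `A` adjoined to `f` and `g` respectively and over bijections between the resulting
multisets, of the supremum displacement. -/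
noncomputable def bdist {X : Type*} [MetricSpace X] (A : Set X) (f g : ℕ → X) : ℝ≥0∞ :=
  ⨅ (α : ℕ → X) (_ : ∀ n, α n ∈ A) (β : ℕ → X) (_ : ∀ n, β n ∈ A)
    (e : (ℕ ⊕ ℕ) ≃ (ℕ ⊕ ℕ)), ⨆ n : ℕ ⊕ ℕ, edist (Sum.elim f α n) (Sum.elim g β (e n))

/-- Two representatives define the same persistence diagram on `(X, A)` iff their restrictions
away from `A` agree as multisets, i.e. there is a value-preserving bijection between the index
sets of points outside `A`. -/
def DiagEquiv {X : Type*} [MetricSpace X] (A : Set X) (f g : ℕ → X) : Prop :=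
  ∃ e : {n : ℕ // f n ∉ A} ≃ {n : ℕ // g n ∉ A}, ∀ p, g (e p).1 = f p.1

/-- A representative belongs to `D_∞(X, A)` iff it is at finite bottleneck distance from the
empty diagram (represented by any multiset of points of `A`). -/
def IsDiagram {X : Type*} [MetricSpace X] (A : Set X) (f : ℕ → X) : Prop :=
  ∃ g : ℕ → X, (∀ n, g n ∈ A) ∧ bdist A f g ≠ ⊤

/-- The quotient metric of `X/A`, read on representatives in `X`:
`d_{X/A}(x,y) = min (d(x,y)) (d(x,A) + d(y,A))`. -/
noncomputable def qdist {X : Type*} [MetricSpace X] (A : Set X) (x y : X) : ℝ :=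
  min (dist x y) (Metric.infDist x A + Metric.infDist y A)

/-!
If `bdist A f g = 0`, then for every `ε > 0` some bijection matches the two diagrams (padded
with points of `A`) with all displacements below `ε`. A point `v ∉ A` is isolated in `X`,
because `Aᶜ` is open and discrete; taking `ε` below its isolation radius, the matching can only
pair copies of `v` with copies of `v`, so both diagrams have equally many copies of `v`.
Gluing these fibrewise bijections gives `DiagEquiv A f g`.
-/

lemma IsClosed.isOpen_singleton_of_notMem {X : Type*} [TopologicalSpace X] {A : Set X}
    (hAcl : IsClosed A) (hdisc : DiscreteTopology (Aᶜ : Set X)) {v : X} (hv : v ∉ A) :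
    IsOpen {v} := by
  simpa using hAcl.isOpen_compl.isOpenMap_subtype_val _ (isOpen_discrete {(⟨v, hv⟩ : ↥Aᶜ)})

def Equiv.fiberSumElim {ι κ X : Type*} (f : ι → X) (α : κ → X) {v : X} (hα : ∀ k, α k ≠ v) :
    {n // Sum.elim f α n = v} ≃ {i // f i = v} :=
  haveI : IsEmpty {k // Sum.elim f α (Sum.inr k) = v} := ⟨fun k => hα k.1 k.2⟩
  Equiv.subtypeSum.trans (Equiv.sumEmpty _ _)

lemma eq_iff_eq_of_dist_lt {X : Type*} [PseudoMetricSpace X] {v x y : X} {ε : ℝ}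
    (hε : ∀ z, dist z v < ε → z = v) (hxy : dist x y < ε) : x = v ↔ y = v := by
  constructor
  · rintro rfl
    exact hε y (by rwa [dist_comm])
  · rintro rfl
    exact hε x hxy

lemma nonempty_fiber_equiv_of_bdist_lt {X : Type*} [MetricSpace X] {A : Set X} {f g : ℕ → X}
    {v : X} (hv : v ∉ A) {ε : ℝ} (hε : ∀ y, dist y v < ε → y = v)
    (h : bdist A f g < ENNReal.ofReal ε) :
    Nonempty ({n // f n = v} ≃ {m // g m = v}) := by
  simp only [bdist, iInf_lt_iff] at h
  obtain ⟨α, hα, β, hβ, e, he⟩ := h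
  have hclose : ∀ n, dist (Sum.elim f α n) (Sum.elim g β (e n)) < ε := fun n =>
    edist_lt_ofReal.mp ((le_iSup _ n).trans_lt he)
  have hfiber : ∀ n, Sum.elim f α n = v ↔ Sum.elim g β (e n) = v := fun n =>
    eq_iff_eq_of_dist_lt hε (hclose n)
  have hα' : ∀ k, α k ≠ v := fun k hk => hv (hk ▸ hα k)
  have hβ' : ∀ k, β k ≠ v := fun k hk => hv (hk ▸ hβ k)
  exact ⟨(Equiv.fiberSumElim f α hα').symm.trans
    ((e.subtypeEquiv hfiber).trans (Equiv.fiberSumElim g β hβ'))⟩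

lemma exists_equiv_subtype_of_nonempty_fiber_equiv {ι κ X : Type*} (p : X → Prop)
    (f : ι → X) (g : κ → X) (h : ∀ c, p c → Nonempty ({i // f i = c} ≃ {k // g k = c})) :
    ∃ e : {i // p (f i)} ≃ {k // p (g k)}, ∀ i, g (e i).1 = f i.1 := by
  have hfib : ∀ c,
      Nonempty ({i : {i // p (f i)} // f i.1 = c} ≃ {k : {k // p (g k)} // g k.1 = c}) := by
    intro c
    by_cases hc : p c
    · exact ⟨(Equiv.subtypeSubtypeEquivSubtype fun hi => hi ▸ hc).trans
        ((h c hc).some.trans (Equiv.subtypeSubtypeEquivSubtype fun hk => hk ▸ hc).symm)⟩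
    · have : IsEmpty {i : {i // p (f i)} // f i.1 = c} := ⟨fun i => hc (i.2 ▸ i.1.2)⟩
      have : IsEmpty {k : {k // p (g k)} // g k.1 = c} := ⟨fun k => hc (k.2 ▸ k.1.2)⟩
      exact ⟨Equiv.equivOfIsEmpty _ _⟩
  have e := fun c => (hfib c).some
  exact ⟨Equiv.ofFiberEquiv e, Equiv.ofFiberEquiv_map e⟩

theorem stmt_0_general {X : Type*} [MetricSpace X] (A : Set X)
    (hAcl : IsClosed A) (hdisc : DiscreteTopology (Aᶜ : Set X))
    (f g : ℕ → X)
    (hne : ¬ DiagEquiv A f g) : 0 < bdist A f g := by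
  by_contra! h
  refine hne (exists_equiv_subtype_of_nonempty_fiber_equiv (· ∉ A) f g fun v hv => ?_)
  obtain ⟨ε, hε, hball⟩ :=
    Metric.isOpen_singleton_iff.1 (hAcl.isOpen_singleton_of_notMem hdisc hv)
  exact nonempty_fiber_equiv_of_bdist_lt hv hball (h.trans_lt (ENNReal.ofReal_pos.2 hε))

/-- If `X \ A` is discrete, then distinct persistence diagrams in `D_∞(X,A)` are at
positive bottleneck distance. -/
theorem stmt_0 {X : Type*} [MetricSpace X] (A : Set X) (hA : A.Nonempty)
    (hAcl : IsClosed A) (hdisc : DiscreteTopology (Aᶜ : Set X))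
    (f g : ℕ → X) (hf : IsDiagram A f) (hg : IsDiagram A g)
    (hne : ¬ DiagEquiv A f g) : 0 < bdist A f g :=
  stmt_0_general A hAcl hdisc f g hne
end

section
/- If X is a metric space and A ⊆ X is a nonempty closed subset such that X \ A (with the restricted metric) is not discrete, then there exist persistence diagrams σ ≠ τ in D_∞(X,A) with d_∞(σ,τ) = 0; hence D_∞(X,A) is not a metric space. -/
open scoped ENNReal
open Filter Metric Set

/-!
A non-isolated point `x` of `X \ A` is the limit of a sequence `u` in `X \ A` avoiding `x`. The
diagrams `u` and `x :: u` differ, since only the second contains `x`. But for every `N` the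
rotation of the first `N + 1` slots matches `u n` with `u n` for `n < N`, `u N` with `x`, and
`u n` with `u (n - 1)` for `n > N`, a matching of cost at most `2 sup_{n ≥ N} d(u n, x)`, so
their bottleneck distance is `0`.
-/

open Topology

lemma exists_seq_tendsto_of_not_discreteTopology {Y : Type*} [TopologicalSpace Y]
    [FrechetUrysohnSpace Y] (h : ¬ DiscreteTopology Y) :
    ∃ (x : Y) (u : ℕ → Y), (∀ n, u n ≠ x) ∧ Tendsto u atTop (𝓝 x) := by
  obtain ⟨x, hx⟩ : ∃ x : Y, (𝓝[≠] x).NeBot := by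
    by_contra! hx
    exact h (discreteTopology_iff_nhds_ne.mpr hx)
  obtain ⟨u, hu, hlim⟩ := mem_closure_iff_seq_limit.mp (mem_closure_iff_nhdsWithin_neBot.mpr hx)
  exact ⟨x, u, hu, hlim⟩

def Nat.cycleUpTo (N : ℕ) : ℕ ≃ ℕ where
  toFun n := if n < N then n + 1 else if n = N then 0 else n
  invFun m := if m = 0 then N else if m ≤ N then m - 1 else m
  left_inv n := by grind
  right_inv m := by grind

section Bottleneck

variable {X : Type*} [MetricSpace X] {A : Set X} {a : X}

lemma bdist_le_iSup_edist (ha : a ∈ A) (f g : ℕ → X) (e : ℕ ≃ ℕ) :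
    bdist A f g ≤ ⨆ n, edist (f n) (g (e n)) := by
  refine (iInf₂_le (fun _ => a) fun _ => ha).trans <|
    (iInf₂_le (fun _ => a) fun _ => ha).trans <|
    (iInf_le _ (e.sumCongr (Equiv.refl ℕ))).trans ?_
  simp [iSup_sum]

lemma isDiagram_of_isBounded (ha : a ∈ A) {f : ℕ → X} (hf : Bornology.IsBounded (range f)) :
    IsDiagram A f := by
  obtain ⟨r, hr⟩ := hf.subset_closedBall a
  refine ⟨fun _ => a, fun _ => ha, ne_top_of_le_ne_top (ENNReal.ofReal_ne_top (r := r)) ?_⟩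
  refine (bdist_le_iSup_edist ha f _ (Equiv.refl ℕ)).trans (iSup_le fun n => ?_)
  rw [edist_dist]
  exact ENNReal.ofReal_le_ofReal (hr (mem_range_self n))

lemma not_diagEquiv_of_mem_range {f g : ℕ → X} {y : X} (hy : y ∉ A) (hg : y ∈ range g)
    (hf : y ∉ range f) : ¬ DiagEquiv A f g := by
  rintro ⟨e, he⟩
  obtain ⟨n, rfl⟩ := hg
  obtain ⟨p, hp⟩ := e.surjective ⟨n, hy⟩
  exact hf ⟨p.1, by rw [← he p, hp]⟩

lemma bdist_cons_eq_zero (ha : a ∈ A) {u : ℕ → X} {x : X} (hu : Tendsto u atTop (𝓝 x)) :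
    bdist A u (Stream'.cons x u) = 0 := by
  refine nonpos_iff_eq_zero.mp (ENNReal.le_of_forall_pos_le_add fun ε hε _ => ?_)
  obtain ⟨N, hN⟩ :=
    EMetric.tendsto_atTop.mp hu (ε / 2) (ENNReal.half_pos (by exact_mod_cast hε.ne'))
  have hclose : ∀ n ≥ N, edist (u n) x ≤ ε / 2 := fun n hn => (hN n hn).le
  rw [zero_add]
  refine (bdist_le_iSup_edist ha u _ (Nat.cycleUpTo N)).trans (iSup_le fun n => ?_)
  rcases lt_trichotomy n N with h | rfl | h
  · have hn : Nat.cycleUpTo N n = n + 1 := if_pos h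
    rw [hn, show Stream'.cons x u (n + 1) = u n from rfl, edist_self]
    exact zero_le
  · have hn : Nat.cycleUpTo n n = 0 := (if_neg n.lt_irrefl).trans (if_pos rfl)
    rw [hn]
    exact (hclose n le_rfl).trans ENNReal.half_le_self
  · obtain ⟨m, rfl⟩ : ∃ m, n = m + 1 := ⟨n - 1, by omega⟩
    have hm : Nat.cycleUpTo N (m + 1) = m + 1 := (if_neg (by omega)).trans (if_neg (by omega))
    calc edist (u (m + 1)) (Stream'.cons x u (Nat.cycleUpTo N (m + 1)))
        = edist (u (m + 1)) (u m) := by rw [hm]; rfl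
      _ ≤ edist (u (m + 1)) x + edist (u m) x := edist_triangle_right _ _ _
      _ ≤ ε / 2 + ε / 2 := add_le_add (hclose _ (by omega)) (hclose _ (by omega))
      _ = ε := ENNReal.add_halves ε

end Bottleneck

theorem stmt_1_general {X : Type*} [MetricSpace X] (A : Set X) (hA : A.Nonempty)
    (hndisc : ¬ DiscreteTopology (Aᶜ : Set X)) :
    ∃ f g : ℕ → X, IsDiagram A f ∧ IsDiagram A g ∧ ¬ DiagEquiv A f g ∧
      bdist A f g = 0 := by
  obtain ⟨a, ha⟩ := hA
  obtain ⟨x, u, hux, hu⟩ := exists_seq_tendsto_of_not_discreteTopology hndisc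
  have hlim : Tendsto (fun n => (u n : X)) atTop (𝓝 x) :=
    (continuous_subtype_val.tendsto x).comp hu
  have hlim' : Tendsto (Stream'.cons (x : X) fun n => (u n : X)) atTop (𝓝 x) :=
    (tendsto_add_atTop_iff_nat 1).mp hlim
  refine ⟨_, _, isDiagram_of_isBounded ha (isBounded_range_of_tendsto _ hlim),
    isDiagram_of_isBounded ha (isBounded_range_of_tendsto _ hlim'),
    not_diagEquiv_of_mem_range x.2 ⟨0, rfl⟩ ?_, bdist_cons_eq_zero ha hlim⟩
  rintro ⟨n, hn⟩
  exact hux n (Subtype.ext hn)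

/-- If `X \ A` is not discrete, then there are distinct persistence diagrams in `D_∞(X,A)`
at bottleneck distance zero; hence `D_∞(X,A)` is not a metric space. -/
theorem stmt_1 {X : Type*} [MetricSpace X] (A : Set X) (hA : A.Nonempty)
    (hAcl : IsClosed A) (hndisc : ¬ DiscreteTopology (Aᶜ : Set X)) :
    ∃ f g : ℕ → X, IsDiagram A f ∧ IsDiagram A g ∧ ¬ DiagEquiv A f g ∧
      bdist A f g = 0 :=
  stmt_1_general A hA hndisc
end

section
/- For a metric pair (X,A), the pseudometric space D_∞(X,A) with the bottleneck distance is a metric space if and only if X \ A with the restricted metric is a discrete space. -/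
open scoped ENNReal
open Filter Metric Set

/-!
If every point of `X \ A` is isolated in `X` (which, for `A` closed, is the same as `X \ A` being
discrete), a matching of displacement less than the isolation radius of `x ∉ A` must send copies
of `x` exactly to copies of `x`; so diagrams at bottleneck distance `0` have equinumerous fibres
over every `x ∉ A`, and these fibre bijections glue to an equivalence of diagrams.

Conversely, if `x ∉ A` is the limit of points `z k ≠ x`, the diagrams `(z k)ₖ` and `x, z 0, z 1, …`
are distinct, yet for every `N` the shift matching `z k ↦ z k` (`k < N`), `z N ↦ x`,
`z k ↦ z (k - 1)` (`k > N`) has displacement at most `2 sup_{k ≥ N} d(z k, x)`.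
-/

open Topology

section Topology

variable {X : Type*} [TopologicalSpace X]

theorem IsOpen.discreteTopology_subtype_iff {s : Set X} (hs : IsOpen s) :
    DiscreteTopology s ↔ ∀ x ∈ s, IsOpen ({x} : Set X) := by
  rw [discreteTopology_iff_isOpen_singleton]
  refine ⟨fun h x hx => ?_, fun h x => ?_⟩
  · simpa using hs.isOpenMap_subtype_val _ (h ⟨x, hx⟩)
  · convert (h x x.2).preimage continuous_subtype_val
    ext
    simp [Subtype.ext_iff]

theorem exists_seq_tendsto_of_not_isOpen_singleton [FrechetUrysohnSpace X] {x : X}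
    (hx : ¬IsOpen ({x} : Set X)) : ∃ z : ℕ → X, (∀ k, z k ≠ x) ∧ Tendsto z atTop (𝓝 x) := by
  rwa [isOpen_singleton_iff_punctured_nhds, ← Ne, ← neBot_iff,
    ← mem_closure_iff_nhdsWithin_neBot, mem_closure_iff_seq_limit] at hx

end Topology

def consSeq {X : Type*} (x : X) (z : ℕ → X) : ℕ → X
  | 0 => x
  | n + 1 => z n

def natCycleRange (N : ℕ) : Equiv.Perm ℕ where
  toFun k := if k < N then k + 1 else if k = N then 0 else k
  invFun k := if k = 0 then N else if k ≤ N then k - 1 else k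
  left_inv k := by grind
  right_inv k := by grind

def Equiv.sumElimFiberEquiv {ι κ γ : Type*} (f : ι → γ) (α : κ → γ) {x : γ}
    (hα : ∀ k, α k ≠ x) : {i // Sum.elim f α i = x} ≃ {n // f n = x} :=
  haveI : IsEmpty {k // Sum.elim f α (.inr k) = x} := ⟨fun k => hα k.1 k.2⟩
  Equiv.subtypeSum.trans (Equiv.sumEmpty _ _)

section Bottleneck

variable {X : Type*} [MetricSpace X] {A : Set X}

theorem bdist_le {f g α β : ℕ → X} (hα : ∀ n, α n ∈ A) (hβ : ∀ n, β n ∈ A)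
    (e : (ℕ ⊕ ℕ) ≃ (ℕ ⊕ ℕ)) :
    bdist A f g ≤ ⨆ n : ℕ ⊕ ℕ, edist (Sum.elim f α n) (Sum.elim g β (e n)) :=
  iInf_le_of_le α <| iInf_le_of_le hα <| iInf_le_of_le β <| iInf_le_of_le hβ <| iInf_le _ e

theorem exists_matching_of_bdist_lt {f g : ℕ → X} {c : ℝ≥0∞} (h : bdist A f g < c) :
    ∃ α, (∀ n, α n ∈ A) ∧ ∃ β, (∀ n, β n ∈ A) ∧ ∃ e : (ℕ ⊕ ℕ) ≃ (ℕ ⊕ ℕ),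
      ∀ n, edist (Sum.elim f α n) (Sum.elim g β (e n)) < c := by
  simp only [bdist, iInf_lt_iff] at h
  obtain ⟨α, hα, β, hβ, e, he⟩ := h
  exact ⟨α, hα, β, hβ, e, fun n => (le_iSup _ n).trans_lt he⟩

theorem isDiagram_of_isBounded_range {a : X} (ha : a ∈ A) {f : ℕ → X}
    (hf : Bornology.IsBounded (range f)) : IsDiagram A f := by
  obtain ⟨C, hC⟩ := hf.subset_closedBall a
  have hC0 : 0 ≤ C := by simpa using dist_nonneg.trans (hC (mem_range_self 0))
  refine ⟨fun _ => a, fun _ => ha, ne_top_of_le_ne_top (ENNReal.ofReal_ne_top (r := C))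
    ((bdist_le (fun _ => ha) (fun _ => ha) (Equiv.refl _)).trans (iSup_le ?_))⟩
  rintro (n | n)
  · exact (edist_le_ofReal hC0).2 (hC (mem_range_self n))
  · simp

theorem bdist_consSeq_le {a : X} (ha : a ∈ A) {x : X} {z : ℕ → X} {N : ℕ} {ε : ℝ≥0∞}
    (hz : ∀ k ≥ N, edist (z k) x ≤ ε) : bdist A z (consSeq x z) ≤ ε + ε := by
  refine (bdist_le (fun _ => ha) (fun _ => ha) ((natCycleRange N).sumCongr (Equiv.refl ℕ))).trans
    (iSup_le ?_)
  rintro (k | k)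
  · simp only [Equiv.sumCongr_apply, Sum.map_inl, Sum.elim_inl, natCycleRange, Equiv.coe_fn_mk]
    rcases lt_trichotomy k N with hk | rfl | hk
    · simp [hk, consSeq]
    · simpa [consSeq] using (hz k le_rfl).trans le_self_add
    · obtain ⟨m, rfl⟩ := Nat.exists_eq_add_of_lt hk
      simp only [show ¬N + m + 1 < N by omega, show N + m + 1 ≠ N by omega, if_false, consSeq]
      exact (edist_triangle_right _ _ x).trans (add_le_add (hz _ (by omega)) (hz _ (by omega)))
  · simp

theorem bdist_consSeq_eq_zero {a : X} (ha : a ∈ A) {x : X} {z : ℕ → X}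
    (hz : Tendsto z atTop (𝓝 x)) : bdist A z (consSeq x z) = 0 := by
  refine nonpos_iff_eq_zero.1 (le_of_forall_gt_imp_ge_of_dense fun c hc => ?_)
  obtain ⟨N, hN⟩ := EMetric.tendsto_atTop.1 hz (c / 2) (ENNReal.half_pos hc.ne')
  calc bdist A z (consSeq x z) ≤ c / 2 + c / 2 := bdist_consSeq_le ha fun k hk => (hN k hk).le
    _ = c := ENNReal.add_halves c

theorem not_diagEquiv_consSeq {x : X} (hx : x ∉ A) {z : ℕ → X} (hz : ∀ k, z k ≠ x) :
    ¬DiagEquiv A z (consSeq x z) := by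
  rintro ⟨e, he⟩
  have h := he (e.symm ⟨0, hx⟩)
  rw [e.apply_symm_apply] at h
  exact hz _ h.symm

theorem isOpen_singleton_of_forall_diagEquiv (hA : A.Nonempty)
    (H : ∀ f g : ℕ → X, IsDiagram A f → IsDiagram A g → bdist A f g = 0 → DiagEquiv A f g)
    {x : X} (hx : x ∉ A) : IsOpen ({x} : Set X) := by
  by_contra hopen
  obtain ⟨a, ha⟩ := hA
  obtain ⟨z, hzx, hz⟩ := exists_seq_tendsto_of_not_isOpen_singleton hopen
  have hz' : Tendsto (consSeq x z) atTop (𝓝 x) := (tendsto_add_atTop_iff_nat 1).1 hz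
  exact not_diagEquiv_consSeq hx hzx <| H _ _
    (isDiagram_of_isBounded_range ha (isBounded_range_of_tendsto _ hz))
    (isDiagram_of_isBounded_range ha (isBounded_range_of_tendsto _ hz'))
    (bdist_consSeq_eq_zero ha hz)

theorem nonempty_fiberEquiv_of_bdist_eq_zero {f g : ℕ → X} (hb : bdist A f g = 0) {x : X}
    (hxA : x ∉ A) (hx : IsOpen ({x} : Set X)) :
    Nonempty ({n // f n = x} ≃ {n // g n = x}) := by
  obtain ⟨ε, hε, hball⟩ := Metric.isOpen_singleton_iff.1 hx
  obtain ⟨α, hα, β, hβ, e, he⟩ :=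
    exists_matching_of_bdist_lt (hb.trans_lt (ENNReal.ofReal_pos.2 hε))
  have hfiber : ∀ i, Sum.elim f α i = x ↔ Sum.elim g β (e i) = x := by
    intro i
    have hd := edist_lt_ofReal.1 (he i)
    exact ⟨fun hi => hball _ (by rwa [dist_comm, hi] at hd), fun hi => hball _ (by rwa [hi] at hd)⟩
  have hne : ∀ {γ : ℕ → X}, (∀ n, γ n ∈ A) → ∀ n, γ n ≠ x := fun hγ n h => hxA (h ▸ hγ n)
  exact ⟨(Equiv.sumElimFiberEquiv f α (hne hα)).symm.trans
    ((e.subtypeEquiv hfiber).trans (Equiv.sumElimFiberEquiv g β (hne hβ)))⟩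

theorem diagEquiv_of_nonempty_fiberEquiv {f g : ℕ → X}
    (h : ∀ x ∉ A, Nonempty ({n // f n = x} ≃ {n // g n = x})) : DiagEquiv A f g := by
  have hfib : ∀ x, Nonempty
      ({p : {n // f n ∉ A} // f p = x} ≃ {q : {n // g n ∉ A} // g q = x}) := by
    intro x
    by_cases hx : x ∈ A
    · have : IsEmpty {p : {n // f n ∉ A} // f p = x} := ⟨fun p => p.1.2 (p.2.symm ▸ hx)⟩
      have : IsEmpty {q : {n // g n ∉ A} // g q = x} := ⟨fun q => q.1.2 (q.2.symm ▸ hx)⟩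
      exact ⟨Equiv.equivOfIsEmpty _ _⟩
    · obtain ⟨e⟩ := h x hx
      exact ⟨(Equiv.subtypeSubtypeEquivSubtype fun hn => hn ▸ hx).trans
        (e.trans (Equiv.subtypeSubtypeEquivSubtype fun hn => hn ▸ hx).symm)⟩
  exact ⟨Equiv.ofFiberEquiv fun x => (hfib x).some,
    Equiv.ofFiberEquiv_map (f := fun p : {n // f n ∉ A} => f p)
      (g := fun q : {n // g n ∉ A} => g q) _⟩

theorem diagEquiv_of_bdist_eq_zero (hiso : ∀ x ∉ A, IsOpen ({x} : Set X)) {f g : ℕ → X}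
    (hb : bdist A f g = 0) : DiagEquiv A f g :=
  diagEquiv_of_nonempty_fiberEquiv fun x hx =>
    nonempty_fiberEquiv_of_bdist_eq_zero hb hx (hiso x hx)

end Bottleneck

/-- `D_∞(X,A)` is a metric space (distinct diagrams are at positive bottleneck distance)
if and only if `X \ A` is discrete. -/
theorem stmt_2 {X : Type*} [MetricSpace X] (A : Set X) (hA : A.Nonempty)
    (hAcl : IsClosed A) :
    (∀ f g : ℕ → X, IsDiagram A f → IsDiagram A g → bdist A f g = 0 → DiagEquiv A f g)
      ↔ DiscreteTopology (Aᶜ : Set X) := by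
  rw [hAcl.isOpen_compl.discreteTopology_subtype_iff]
  exact ⟨fun H x hx => isOpen_singleton_of_forall_diagEquiv hA H hx,
    fun hiso f g _ _ hb => diagEquiv_of_bdist_eq_zero hiso hb⟩
end

section
/- Let (X,d) be a metric space with basepoint a_0 and let p ∈ [1,∞]. If the space D_p(X,{a_0}) of p-persistence diagrams with the p-Wasserstein (or bottleneck, if p = ∞) distance is a complete (pseudo)metric space, then X is complete. -/
/-!
A Cauchy sequence `u` in `X` gives a Cauchy sequence of one-point diagrams `{{u k}}`, since
`d_p({{x}}, {{y}}) ≤ d(x, y)`; its limit `τ` is also its limit for the bottleneck distance.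
A matching of `{{u k}}` with `τ` of bottleneck cost `< ε` sends `u k` either to `a₀` or to some
point `τ n`, and brings every other point of `τ` within `ε` of `a₀`. If `u` accumulates at `a₀`,
then, being Cauchy, it converges to `a₀`. Otherwise `u` eventually stays `δ`-far from `a₀`; then
at most one point `τ n₀` of `τ` is `δ/2`-far from `a₀`, `u k` is eventually matched with it,
and `u k → τ n₀`.
-/

open scoped ENNReal
open Filter Metric Set

/-- The `p`-Wasserstein (`p = ∞`: bottleneck) distance between representatives of
persistence diagrams on `(X, A)`. -/
noncomputable def pdist {X : Type*} [MetricSpace X] (A : Set X) (p : ℝ≥0∞)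
    (f g : ℕ → X) : ℝ≥0∞ :=
  ⨅ (α : ℕ → X) (_ : ∀ n, α n ∈ A) (β : ℕ → X) (_ : ∀ n, β n ∈ A)
    (e : (ℕ ⊕ ℕ) ≃ (ℕ ⊕ ℕ)),
      if p = ⊤ then ⨆ n : ℕ ⊕ ℕ, edist (Sum.elim f α n) (Sum.elim g β (e n))
      else (∑' n : ℕ ⊕ ℕ, edist (Sum.elim f α n) (Sum.elim g β (e n)) ^ p.toReal) ^ (1 / p.toReal)

section Matching

open Function

variable {X : Type*} [MetricSpace X] {A : Set X} {p : ℝ≥0∞}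

theorem pdist_update_le {a : X} (ha : a ∈ A) (hp : p ≠ 0) (f : ℕ → X) (i : ℕ) (x y : X) :
    pdist A p (update f i x) (update f i y) ≤ edist x y := by
  have hcost : ∀ n : ℕ ⊕ ℕ, n ≠ .inl i →
      edist (Sum.elim (update f i x) (fun _ => a) n) (Sum.elim (update f i y) (fun _ => a) n) = 0 := by
    rintro (m | m) hm
    · have hmi : m ≠ i := fun h => hm (congrArg Sum.inl h)
      simp [update_of_ne hmi]
    · simp
  refine (iInf₂_le (fun _ => a) fun _ => ha).trans <| (iInf₂_le (fun _ => a) fun _ => ha).trans <|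
    (iInf_le _ (Equiv.refl _)).trans ?_
  split_ifs with htop
  · refine iSup_le fun n => ?_
    by_cases hn : n = Sum.inl i
    · simp [hn]
    · exact (hcost n hn).trans_le bot_le
  · have hpr : 0 < p.toReal := ENNReal.toReal_pos hp htop
    rw [tsum_eq_single (Sum.inl i) fun n hn => by
      rw [Equiv.refl_apply, hcost n hn, ENNReal.zero_rpow_of_pos hpr]]
    simp [ENNReal.rpow_rpow_inv hpr.ne']

theorem bdist_le_pdist (hp : p ≠ 0) (f g : ℕ → X) : bdist A f g ≤ pdist A p f g := by
  refine iInf₂_mono fun α _ => iInf₂_mono fun β _ => iInf_mono fun e => ?_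
  split_ifs with htop
  · exact le_rfl
  · have hpr : 0 < p.toReal := ENNReal.toReal_pos hp htop
    refine iSup_le fun n => ?_
    set cost : ℕ ⊕ ℕ → ℝ≥0∞ := fun n => edist (Sum.elim f α n) (Sum.elim g β (e n))
    calc cost n = (cost n ^ p.toReal) ^ (1 / p.toReal) := by
          rw [one_div, ENNReal.rpow_rpow_inv hpr.ne']
      _ ≤ (∑' m, cost m ^ p.toReal) ^ (1 / p.toReal) := by
          gcongr
          exact ENNReal.le_tsum n

theorem exists_equiv_edist_lt_of_bdist_lt {f g : ℕ → X} {ε : ℝ≥0∞} (h : bdist A f g < ε) :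
    ∃ α : ℕ → X, (∀ n, α n ∈ A) ∧ ∃ β : ℕ → X, (∀ n, β n ∈ A) ∧ ∃ e : (ℕ ⊕ ℕ) ≃ (ℕ ⊕ ℕ),
      ∀ n, edist (Sum.elim f α n) (Sum.elim g β (e n)) < ε := by
  simp only [bdist, iInf_lt_iff, iSup_lt_iff] at h
  obtain ⟨α, hα, β, hβ, e, b, hb, hle⟩ := h
  exact ⟨α, hα, β, hβ, e, fun n => (hle n).trans_lt hb⟩

end Matching

section SingletonDiagram

open Function Topology

variable {X : Type*} [MetricSpace X]

def singletonDiagram (a₀ x : X) : ℕ → X := update (fun _ => a₀) 0 x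

variable {a₀ : X}

theorem edist_lt_or_exists_of_bdist_singletonDiagram_lt {x : X} {τ : ℕ → X} {ε : ℝ≥0∞}
    (h : bdist {a₀} (singletonDiagram a₀ x) τ < ε) :
    edist x a₀ < ε ∨ ∃ n, edist x (τ n) < ε ∧ ∀ m ≠ n, edist (τ m) a₀ < ε := by
  obtain ⟨α, hα, β, hβ, e, he⟩ := exists_equiv_edist_lt_of_bdist_lt h
  obtain rfl : α = fun _ => a₀ := funext hα
  obtain rfl : β = fun _ => a₀ := funext hβ
  simp only [singletonDiagram, Sum.elim_update_left] at he
  have hx := he (Sum.inl 0)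
  rw [update_self] at hx
  rcases he0 : e (Sum.inl 0) with n | n <;> rw [he0] at hx
  · refine Or.inr ⟨n, hx, fun m hm => ?_⟩
    have hne : e.symm (Sum.inl m) ≠ Sum.inl 0 := by
      rw [Ne, Equiv.symm_apply_eq, he0, Sum.inl.injEq]
      exact hm
    simpa [update_of_ne hne, edist_comm] using he (e.symm (Sum.inl m))
  · exact Or.inl hx

variable {u τ : ℕ → X}

theorem tendsto_of_bdist_singletonDiagram_tendsto_zero_of_eventually_le_edist
    {δ : ℝ≥0∞} (hδ : 0 < δ) (hfar : ∀ᶠ k in atTop, δ ≤ edist (u k) a₀)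
    (hτ : Tendsto (fun k => bdist {a₀} (singletonDiagram a₀ (u k)) τ) atTop (𝓝 0)) :
    ∃ n, Tendsto u atTop (𝓝 (τ n)) := by
  have hη : 0 < δ / 2 := ENNReal.half_pos hδ.ne'
  have hmatched : ∀ ε, 0 < ε → ε ≤ δ / 2 → ∀ᶠ k in atTop,
      ∃ n, edist (u k) (τ n) < ε ∧ ∀ m ≠ n, edist (τ m) a₀ < ε := by
    intro ε hε hεδ
    filter_upwards [hτ.eventually (gt_mem_nhds hε), hfar] with k hk hk_far
    refine (edist_lt_or_exists_of_bdist_singletonDiagram_lt hk).resolve_left fun hk_near => ?_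
    exact (hk_far.trans_lt (hk_near.trans_le (hεδ.trans ENNReal.half_le_self))).false
  obtain ⟨-, n₀, -, hn₀⟩ := (hmatched _ hη le_rfl).exists
  refine ⟨n₀, nhds_basis_eball.tendsto_right_iff.2 fun ε hε => ?_⟩
  filter_upwards [hmatched _ (lt_min hε hη) (min_le_right _ _), hfar] with k ⟨n, hkn, _⟩ hk_far
  obtain rfl : n = n₀ := by
    by_contra hne
    have hk_near : edist (u k) a₀ < δ :=
      calc edist (u k) a₀ ≤ edist (u k) (τ n) + edist (τ n) a₀ := edist_triangle _ _ _
        _ < δ / 2 + δ / 2 := ENNReal.add_lt_add (hkn.trans_le (min_le_right _ _)) (hn₀ n hne)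
        _ = δ := ENNReal.add_halves δ
    exact hk_near.not_ge hk_far
  exact hkn.trans_le (min_le_left _ _)

theorem exists_tendsto_of_bdist_singletonDiagram_tendsto_zero (hu : CauchySeq u)
    (hτ : Tendsto (fun k => bdist {a₀} (singletonDiagram a₀ (u k)) τ) atTop (𝓝 0)) :
    ∃ x, Tendsto u atTop (𝓝 x) := by
  by_cases hclust : MapClusterPt a₀ atTop u
  · exact ⟨a₀, le_nhds_of_cauchy_adhp hu hclust⟩
  · simp only [nhds_basis_eball.mapClusterPt_iff_frequently, not_forall, not_frequently,
      mem_eball, not_lt] at hclust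
    obtain ⟨δ, hδ, hfar⟩ := hclust
    obtain ⟨n, hn⟩ := tendsto_of_bdist_singletonDiagram_tendsto_zero_of_eventually_le_edist hδ hfar hτ
    exact ⟨τ n, hn⟩

end SingletonDiagram

/-- If `D_p(X, {a₀})` is complete (every Cauchy sequence of `p`-persistence diagrams
converges to a `p`-persistence diagram), then `X` is complete. -/
theorem stmt_3 {X : Type*} [MetricSpace X] (a₀ : X) (p : ℝ≥0∞) (hp : 1 ≤ p)
    (hcomp : ∀ σ : ℕ → ℕ → X,
      (∀ k, pdist {a₀} p (σ k) (fun _ => a₀) ≠ ⊤) →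
      (∀ ε : ℝ≥0∞, 0 < ε → ∃ N, ∀ j k, N ≤ j → N ≤ k → pdist {a₀} p (σ j) (σ k) < ε) →
      ∃ τ : ℕ → X, pdist {a₀} p τ (fun _ => a₀) ≠ ⊤ ∧
        Tendsto (fun k => pdist {a₀} p (σ k) τ) atTop (nhds 0)) :
    CompleteSpace X := by
  have hp0 : p ≠ 0 := (zero_lt_one.trans_le hp).ne'
  have hsingle (x y : X) :
      pdist {a₀} p (singletonDiagram a₀ x) (singletonDiagram a₀ y) ≤ edist x y :=
    pdist_update_le (mem_singleton a₀) hp0 _ 0 x y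
  refine EMetric.complete_of_cauchySeq_tendsto fun u hu => ?_
  have hempty : (fun _ => a₀) = singletonDiagram a₀ a₀ := (Function.update_eq_self 0 _).symm
  obtain ⟨τ, -, hτ⟩ := hcomp (fun k => singletonDiagram a₀ (u k))
    (fun k => hempty ▸ ne_top_of_le_ne_top (edist_ne_top _ _) (hsingle _ _))
    (fun ε hε => (EMetric.cauchySeq_iff.1 hu ε hε).imp fun _ hN j k hj hk =>
      (hsingle _ _).trans_lt (hN j hj k hk))
  exact exists_tendsto_of_bdist_singletonDiagram_tendsto_zero hu
    (tendsto_of_tendsto_of_tendsto_of_le_of_le tendsto_const_nhds hτ (fun _ => bot_le)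
      fun _ => bdist_le_pdist hp0 _ _)
end

section
/- Let (X,a_0) be a pointed metric space and let (σ_n) be a Cauchy sequence in the pseudometric space D_∞(X,{a_0}). Then there exists a Cauchy sequence (σ̂_n) in ℓ_∞(X,a_0) (bounded sequences with the supremum metric) such that for every n the multiset underlying σ̂_n represents the diagram σ_n. -/
open scoped ENNReal
open Filter Metric Set

/-!
Pad every diagram with infinitely many copies of `a₀`, indexed by `ℕ ⊕ ℕ`. For singleton `A`
the bottleneck distance is then the infimum, over rearrangements, of the sup distance between the
padded sequences, so a diagram is an orbit of the permutation action on `ℕ →ᵤ X` and a Cauchy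
sequence of diagrams is Cauchy in the orbit distance. Such a sequence lifts: along a subsequence
with gaps `< 2⁻ⁱ` the representatives can be matched one after the other, giving a geometric
Cauchy sequence, and every remaining term is matched to the last subsequence term preceding it.
-/

open scoped UniformConvergence

theorem CauchySeq.of_tendsto_uniformity {α : Type*} [UniformSpace α] {u v : ℕ → α}
    (hv : CauchySeq v) (huv : Tendsto (fun n => (u n, v n)) atTop (uniformity α)) :
    CauchySeq u := by
  rw [cauchySeq_iff_tendsto] at hv ⊢
  have h₁ : Tendsto (fun p : ℕ × ℕ => (u p.1, v p.1)) atTop (uniformity α) :=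
    huv.comp (tendsto_fst.mono_left prod_atTop_atTop_eq.ge)
  have h₂ : Tendsto (fun p : ℕ × ℕ => (v p.2, u p.2)) atTop (uniformity α) :=
    (huv.comp (tendsto_snd.mono_left prod_atTop_atTop_eq.ge)).uniformity_symm
  exact (h₁.uniformity_trans hv).uniformity_trans h₂

theorem exists_seq_mem_of_forall_exists_mem_succ {Y : Type*} {S : ℕ → Set Y}
    {R : ℕ → Y → Y → Prop} {x₀ : Y} (hx₀ : x₀ ∈ S 0)
    (h : ∀ i, ∀ y ∈ S i, ∃ z ∈ S (i + 1), R i y z) :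
    ∃ v : ℕ → Y, (∀ i, v i ∈ S i) ∧ ∀ i, R i (v i) (v (i + 1)) := by
  choose next hnextS hnextR using fun i (y : S i) => h i y y.2
  let w : (i : ℕ) → S i := fun i => Nat.rec ⟨x₀, hx₀⟩ (fun i y => ⟨next i y, hnextS i y⟩) i
  exact ⟨fun i => (w i).1, fun i => (w i).2, fun i => hnextR i (w i)⟩

theorem exists_cauchySeq_mem_of_forall_exists_edist_lt {Y : Type*} [PseudoEMetricSpace Y]
    {S : ℕ → Set Y} (hS : ∀ k, (S k).Nonempty)
    (h : ∀ ε > 0, ∃ N, ∀ j k, N ≤ j → j ≤ k → ∀ y ∈ S j, ∃ z ∈ S k, edist y z < ε) :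
    ∃ y : ℕ → Y, (∀ k, y k ∈ S k) ∧ CauchySeq y := by
  obtain ⟨φ, hφ, hφS⟩ : ∃ φ : ℕ → ℕ, StrictMono φ ∧ ∀ i j k, φ i ≤ j → j ≤ k →
      ∀ y ∈ S j, ∃ z ∈ S k, edist y z < 2⁻¹ ^ i :=
    extraction_forall_of_eventually' fun i =>
      (h _ (ENNReal.pow_pos (ENNReal.inv_pos.2 ENNReal.ofNat_ne_top) i)).imp
        fun N hN m hm j k hj hjk => hN j k (hm.trans hj) hjk
  obtain ⟨v, hvS, hv⟩ : ∃ v : ℕ → Y, (∀ i, v i ∈ S (φ i)) ∧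
      ∀ i, edist (v i) (v (i + 1)) < 2⁻¹ ^ i :=
    exists_seq_mem_of_forall_exists_mem_succ (S := fun i => S (φ i)) (hS _).some_mem
      fun i => hφS i _ _ le_rfl (hφ.monotone i.le_succ)
  have hv_cauchy : CauchySeq v :=
    cauchySeq_of_edist_le_geometric 2⁻¹ 1 (by norm_num) ENNReal.one_ne_top
      fun i => by rw [one_mul]; exact (hv i).le
  let stage : ℕ → ℕ := fun k => Nat.findGreatest (fun i => φ i ≤ k) k
  have hstage : Tendsto stage atTop atTop := tendsto_atTop_atTop.2 fun i =>
    ⟨max i (φ i), fun k hk => Nat.le_findGreatest (le_of_max_le_left hk) (le_of_max_le_right hk)⟩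
  have hφstage : ∀ k, φ 0 ≤ k → φ (stage k) ≤ k := fun k hk =>
    Nat.findGreatest_spec (P := fun i => φ i ≤ k) k.zero_le hk
  choose y hyS hyv using fun k =>
    show ∃ z ∈ S k, φ 0 ≤ k → edist z (v (stage k)) < 2⁻¹ ^ stage k by
      by_cases hk : φ 0 ≤ k
      · obtain ⟨z, hz, hvz⟩ := hφS (stage k) _ k le_rfl (hφstage k hk) _ (hvS (stage k))
        exact ⟨z, hz, fun _ => by rwa [edist_comm]⟩
      · exact ⟨(hS k).some, (hS k).some_mem, fun hk' => absurd hk' hk⟩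
  refine ⟨y, hyS, (hv_cauchy.comp_tendsto hstage).of_tendsto_uniformity ?_⟩
  refine uniformity_basis_edist.tendsto_right_iff.2 fun ε hε => ?_
  obtain ⟨i, hi⟩ := ENNReal.exists_inv_two_pow_lt hε.ne'
  filter_upwards [hstage.eventually_ge_atTop i, eventually_ge_atTop (φ 0)] with k hik hk
  calc edist (y k) (v (stage k)) < 2⁻¹ ^ stage k := hyv k hk
    _ ≤ 2⁻¹ ^ i := pow_le_pow_right_of_le_one' (ENNReal.inv_le_one.2 one_le_two) hik
    _ < ε := hi

section Padding

variable {X : Type*} [MetricSpace X]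

def pad (a₀ : X) (f : ℕ → X) : ℕ ⊕ ℕ → X :=
  Sum.elim f fun _ => a₀

theorem exists_equiv_iSup_edist_pad_lt {a₀ : X} {f g : ℕ → X} {ε : ℝ≥0∞}
    (h : bdist {a₀} f g < ε) :
    ∃ e : ℕ ⊕ ℕ ≃ ℕ ⊕ ℕ, ⨆ q, edist (pad a₀ f q) (pad a₀ g (e q)) < ε := by
  simp only [bdist, iInf_lt_iff] at h
  obtain ⟨α, hα, β, hβ, e, he⟩ := h
  obtain rfl : α = fun _ => a₀ := funext hα
  obtain rfl : β = fun _ => a₀ := funext hβ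
  exact ⟨e, he⟩

theorem IsDiagram.iSup_edist_pad_ne_top {a₀ : X} {f : ℕ → X} (hf : IsDiagram {a₀} f) :
    ⨆ q, edist (pad a₀ f q) a₀ ≠ ⊤ := by
  obtain ⟨g, hg, hfg⟩ := hf
  obtain ⟨e, he⟩ := exists_equiv_iSup_edist_pad_lt (lt_top_iff_ne_top.2 hfg)
  have hg' : ∀ q, pad a₀ g q = a₀ := Sum.rec hg fun _ => rfl
  simp only [hg'] at he
  exact he.ne

theorem diagEquiv_pad_comp (a₀ : X) (f : ℕ → X) (c : ℕ ≃ ℕ ⊕ ℕ) :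
    DiagEquiv {a₀} (pad a₀ f ∘ c) f := by
  have : IsEmpty {n : ℕ // pad a₀ f (.inr n) ∉ ({a₀} : Set X)} := ⟨fun n => n.2 rfl⟩
  let e : {q // pad a₀ f q ∉ ({a₀} : Set X)} ≃ {n // f n ∉ ({a₀} : Set X)} :=
    Equiv.subtypeSum.trans (Equiv.sumEmpty _ _)
  suffices he : ∀ q, f (e q).1 = pad a₀ f q.1 from
    ⟨(c.subtypeEquiv fun _ => Iff.rfl).trans e, fun p => he _⟩
  rintro ⟨m | m, hm⟩
  · rfl
  · exact absurd rfl hm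

end Padding

/-- Every Cauchy sequence `σ` in `D_∞(X, {a₀})` can be lifted to a Cauchy sequence in
`ℓ_∞(X, a₀)` (bounded sequences with the supremum metric) whose terms represent the
corresponding diagrams. -/
theorem stmt_6 {X : Type*} [MetricSpace X] (a₀ : X) (σ : ℕ → ℕ → X)
    (hd : ∀ k, IsDiagram {a₀} (σ k))
    (hc : ∀ ε : ℝ≥0∞, 0 < ε → ∃ N, ∀ j k, N ≤ j → N ≤ k → bdist {a₀} (σ j) (σ k) < ε) :
    ∃ τ : ℕ → ℕ → X,
      (∀ k, DiagEquiv {a₀} (τ k) (σ k)) ∧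
      (∀ k, (⨆ n, edist (τ k n) a₀) ≠ ⊤) ∧
      ∀ ε : ℝ≥0∞, 0 < ε → ∃ N, ∀ j k, N ≤ j → N ≤ k →
        (⨆ n, edist (τ j n) (τ k n)) < ε := by
  let S : ℕ → Set (ℕ →ᵤ X) := fun k =>
    range fun c : ℕ ≃ ℕ ⊕ ℕ => UniformFun.ofFun (pad a₀ (σ k) ∘ c)
  have hS : ∀ ε > 0, ∃ N, ∀ j k, N ≤ j → j ≤ k → ∀ y ∈ S j, ∃ z ∈ S k, edist y z < ε := by
    intro ε hε
    obtain ⟨N, hN⟩ := hc ε hε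
    refine ⟨N, fun j k hj hjk => ?_⟩
    rintro _ ⟨c, rfl⟩
    obtain ⟨e, he⟩ := exists_equiv_iSup_edist_pad_lt (hN j k hj (hj.trans hjk))
    refine ⟨_, ⟨c.trans e, rfl⟩, lt_of_le_of_lt ?_ he⟩
    exact iSup_le fun n => le_iSup (fun q => edist (pad a₀ (σ j) q) (pad a₀ (σ k) (e q))) (c n)
  obtain ⟨y, hyS, hy⟩ := exists_cauchySeq_mem_of_forall_exists_edist_lt
    (fun k => range_nonempty_iff_nonempty.2 ⟨Equiv.natSumNatEquivNat.symm⟩) hS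
  choose c hc using hyS
  refine ⟨fun k => pad a₀ (σ k) ∘ c k, fun k => diagEquiv_pad_comp a₀ (σ k) (c k), fun k => ?_, ?_⟩
  · exact ne_top_of_le_ne_top (hd k).iSup_edist_pad_ne_top
      (iSup_le fun n => le_iSup (fun q => edist (pad a₀ (σ k) q) a₀) (c k n))
  · intro ε hε
    obtain ⟨N, hN⟩ := EMetric.cauchySeq_iff.1 hy ε hε
    refine ⟨N, fun j k hj hk => ?_⟩
    have hjk := hN j hj k hk
    rwa [← hc j, ← hc k] at hjk
end

section
/- The space D_∞(ℝ²_{≥0}, Δ) of usual persistence diagrams with the bottleneck distance is not separable, where ℝ²_{≥0} = {(x,y) ∈ ℝ² : 0 ≤ x ≤ y} and Δ = {(x,y) : x = y}. -/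
open scoped ENNReal
open Filter Metric Set

/-!
For `T ⊆ ℕ` let `diagramOf T` be the diagram with one point `(n, n + 1)` for each `n ∈ T`.
These points lie at distance `1/2` from the diagonal and at distance at least `1` from each
other, so a diagram within `1/4` of both `diagramOf T` and `diagramOf T'` forces `T = T'`
(compose the two matchings through it). A countable dense family would therefore receive an
injection from the uncountable set `Set ℕ`.
-/

section Bottleneck

variable {X : Type*} [MetricSpace X] {A : Set X} {f g : ℕ → X} {r : ℝ}

lemma exists_dist_lt_of_bdist_lt (h : bdist A f g < ENNReal.ofReal r) (n : ℕ) :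
    ∃ y, (y ∈ A ∨ y ∈ range g) ∧ dist (f n) y < r := by
  simp only [bdist, iInf_lt_iff] at h
  obtain ⟨α, -, β, hβ, e, he⟩ := h
  refine ⟨Sum.elim g β (e (.inl n)), ?_, ?_⟩
  · rcases e (.inl n) with m | m
    exacts [.inr ⟨m, rfl⟩, .inl (hβ m)]
  · have := (le_iSup _ (Sum.inl n)).trans_lt he
    exact edist_lt_ofReal.mp this

lemma exists_dist_lt_of_bdist_lt' (h : bdist A f g < ENNReal.ofReal r) (m : ℕ) :
    ∃ x, (x ∈ A ∨ x ∈ range f) ∧ dist x (g m) < r := by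
  simp only [bdist, iInf_lt_iff] at h
  obtain ⟨α, hα, β, -, e, he⟩ := h
  refine ⟨Sum.elim f α (e.symm (.inl m)), ?_, ?_⟩
  · rcases e.symm (.inl m) with l | l
    exacts [.inr ⟨l, rfl⟩, .inl (hα l)]
  · have := (le_iSup _ (e.symm (.inl m))).trans_lt he
    rw [Equiv.apply_symm_apply] at this
    exact edist_lt_ofReal.mp this

/-- Compose the two matchings through `g`; since `f n` is far from `A`, neither of them can send
it into `A`. -/
lemma exists_dist_lt_of_bdist_lt_of_bdist_lt {f' : ℕ → X}
    (h : bdist A f g < ENNReal.ofReal r) (h' : bdist A f' g < ENNReal.ofReal r) {n : ℕ}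
    (hn : ∀ a ∈ A, 2 * r ≤ dist (f n) a) : ∃ l, dist (f n) (f' l) < 2 * r := by
  obtain ⟨y, hyA | ⟨m, rfl⟩, hy⟩ := exists_dist_lt_of_bdist_lt h n
  · linarith [hn y hyA, dist_nonneg.trans_lt hy]
  obtain ⟨x, hxA | ⟨l, rfl⟩, hx⟩ := exists_dist_lt_of_bdist_lt' h' m
  · linarith [hn x hxA, dist_triangle_right (f n) x (g m)]
  · exact ⟨l, by linarith [dist_triangle_right (f n) (f' l) (g m)]⟩

end Bottleneck

abbrev UpperHalf := {p : ℝ × ℝ // 0 ≤ p.1 ∧ p.1 ≤ p.2}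

def diag : Set UpperHalf := {p | p.val.1 = p.val.2}

def barPt (n : ℕ) : UpperHalf := ⟨((n : ℝ), n + 1), n.cast_nonneg, by linarith⟩

def diagPt (n : ℕ) : UpperHalf := ⟨((n : ℝ), n), n.cast_nonneg, le_rfl⟩

lemma half_le_dist_barPt {n : ℕ} {q : UpperHalf} (hq : q ∈ diag) :
    1 / 2 ≤ dist (barPt n) q := by
  obtain ⟨⟨s, t⟩, _⟩ := q
  obtain rfl : s = t := hq
  rw [Subtype.dist_eq, Prod.dist_eq, Real.dist_eq, Real.dist_eq]
  simp only [barPt]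
  rcases le_total s (n + 1 / 2) with h | h
  · exact le_max_of_le_right (by rw [abs_of_nonneg] <;> linarith)
  · exact le_max_of_le_left (by rw [abs_of_nonpos] <;> linarith)

lemma eq_of_dist_barPt_lt_one {n l : ℕ} (h : dist (barPt n) (barPt l) < 1) : n = l := by
  by_contra hne
  have h1 : 1 ≤ dist (n : ℝ) l := Nat.pairwise_one_le_dist hne
  have h2 : dist (n : ℝ) l ≤ dist (barPt n) (barPt l) := by
    rw [Subtype.dist_eq, Prod.dist_eq]; exact le_max_left _ _
  linarith

open Classical in
noncomputable def diagramOf (T : Set ℕ) (n : ℕ) : UpperHalf :=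
  if n ∈ T then barPt n else diagPt n

lemma isDiagram_diagramOf (T : Set ℕ) : IsDiagram diag (diagramOf T) := by
  refine ⟨diagPt, fun n => rfl, ne_top_of_le_ne_top ENNReal.one_ne_top ?_⟩
  refine iInf₂_le_of_le diagPt (fun n => rfl) <| iInf₂_le_of_le diagPt (fun n => rfl) <|
    iInf_le_of_le (Equiv.refl _) <| iSup_le ?_
  rintro (n | n)
  · rw [Sum.elim_inl, Equiv.refl_apply, Sum.elim_inl, edist_dist, ← ENNReal.ofReal_one]
    refine ENNReal.ofReal_le_ofReal ?_
    unfold diagramOf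
    split_ifs
    · simp [Subtype.dist_eq, Prod.dist_eq, barPt, diagPt]
    · simp
  · simp

lemma subset_of_bdist_diagramOf_lt {T T' : Set ℕ} {g : ℕ → UpperHalf}
    (h : bdist diag (diagramOf T) g < ENNReal.ofReal (1 / 4))
    (h' : bdist diag (diagramOf T') g < ENNReal.ofReal (1 / 4)) : T ⊆ T' := by
  intro n hn
  have hfar : ∀ q ∈ diag, 2 * (1 / 4) ≤ dist (diagramOf T n) q := fun q hq => by
    rw [diagramOf, if_pos hn]; linarith [half_le_dist_barPt (n := n) hq]
  obtain ⟨l, hl⟩ := exists_dist_lt_of_bdist_lt_of_bdist_lt h h' hfar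
  rw [diagramOf, if_pos hn] at hl
  by_cases hlT : l ∈ T'
  · rw [diagramOf, if_pos hlT] at hl
    rwa [eq_of_dist_barPt_lt_one (n := n) (l := l) (by linarith)]
  · rw [diagramOf, if_neg hlT] at hl
    linarith [half_le_dist_barPt (n := n) (q := diagPt l) rfl]

/-- The usual space of persistence diagrams `D_∞(ℝ²_{≥0}, Δ)` with the bottleneck distance
is not separable. -/
theorem stmt_11 :
    ¬ ∃ S : Set (ℕ → {p : ℝ × ℝ // 0 ≤ p.1 ∧ p.1 ≤ p.2}),
      S.Countable ∧
      (∀ f ∈ S, IsDiagram {p : {p : ℝ × ℝ // 0 ≤ p.1 ∧ p.1 ≤ p.2} | p.val.1 = p.val.2} f) ∧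
      ∀ f : ℕ → {p : ℝ × ℝ // 0 ≤ p.1 ∧ p.1 ≤ p.2},
        IsDiagram {p : {p : ℝ × ℝ // 0 ≤ p.1 ∧ p.1 ≤ p.2} | p.val.1 = p.val.2} f →
        ∀ ε : ℝ≥0∞, 0 < ε → ∃ g ∈ S,
          bdist {p : {p : ℝ × ℝ // 0 ≤ p.1 ∧ p.1 ≤ p.2} | p.val.1 = p.val.2} f g < ε := by
  rintro ⟨S, hS, -, hdense⟩
  choose g hgS hg using fun T : Set ℕ =>
    hdense (diagramOf T) (isDiagram_diagramOf T) (ENNReal.ofReal (1 / 4)) (by norm_num)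
  have hinj : Function.Injective fun T => (⟨g T, hgS T⟩ : S) := by
    intro T T' hTT'
    have hgg : g T = g T' := congrArg Subtype.val hTT'
    have h : bdist diag (diagramOf T') (g T) < ENNReal.ofReal (1 / 4) := hgg ▸ hg T'
    exact (subset_of_bdist_diagramOf_lt (hg T) h).antisymm (subset_of_bdist_diagramOf_lt h (hg T))
  have := hS.to_subtype
  have := hinj.countable
  obtain ⟨c, hc⟩ := Countable.exists_injective_nat (Set ℕ)
  exact Function.cantor_injective c hc
end

section
/- Let X be a proper metric space and A ⊆ X a nonempty closed subset. Then any geodesic in the quotient metric space X/A with the collapsed point A as an endpoint can be lifted to a geodesic in X: if η : [0,1] → X/A is a constant-speed geodesic with η(0) = A, there exists a geodesicη' : [0,1] → X with η'(t) = η(t) for t > 0 (viewing points of X\A in X/A as points of X) and η'(0) ∈ A. -/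
open scoped ENNReal
open Filter Metric Set

open Topology

/-!
Along a quotient geodesic `η` issuing from the collapsed point, `d(η t, A) = t L`, where `L` is
its length. If `L = 0`, the whole path lies in `A` and the constant path at `η 0` is a lift.
If `L > 0`, then `|s - t| L < (s + t) L` for `s, t > 0`, so the quotient distance between
`η s` and `η t` is realised by `d`: on `(0, 1]` the path is already a constant-speed geodesic of
`X`. By completeness it has a limit as `t → 0⁺`; this limit continues the geodesic to `[0, 1]`
and is at distance `0` from the closed set `A`.
-/

theorem UniformContinuousOn.exists_tendsto_nhdsWithin {α β : Type*} [UniformSpace α]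
    [UniformSpace β] [CompleteSpace β] {f : α → β} {s : Set α} (hf : UniformContinuousOn f s)
    {x : α} (hx : x ∈ closure s) : ∃ b, Tendsto f (𝓝[s] x) (𝓝 b) :=
  have := mem_closure_iff_nhdsWithin_neBot.1 hx
  cauchy_map_iff_exists_tendsto.1 <|
    (cauchy_nhds.mono nhdsWithin_le_nhds).map_of_le hf inf_le_right

section Extension

variable {X : Type*} [MetricSpace X] {γ : ℝ → X} {L : ℝ}

theorem exists_tendsto_nhdsGT_zero_of_dist_eq [CompleteSpace X] (hL : 0 ≤ L)
    (hγ : ∀ s ∈ Ioc (0 : ℝ) 1, ∀ t ∈ Ioc (0 : ℝ) 1, dist (γ s) (γ t) = |s - t| * L) :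
    ∃ a, Tendsto γ (𝓝[>] 0) (𝓝 a) := by
  have hlip : LipschitzOnWith L.toNNReal γ (Ioc 0 1) :=
    .of_dist_le_mul fun s hs t ht ↦ by
      rw [hγ s hs t ht, Real.coe_toNNReal L hL, Real.dist_eq, mul_comm]
  have h0 : (0 : ℝ) ∈ closure (Ioc 0 1) := by simp
  simpa only [nhdsWithin_Ioc_eq_nhdsGT one_pos] using
    hlip.uniformContinuousOn.exists_tendsto_nhdsWithin h0

theorem dist_eq_of_tendsto_nhdsGT_zero {a : X} (ha : Tendsto γ (𝓝[>] 0) (𝓝 a))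
    (hγ : ∀ s ∈ Ioc (0 : ℝ) 1, ∀ t ∈ Ioc (0 : ℝ) 1, dist (γ s) (γ t) = |s - t| * L)
    {t : ℝ} (ht : t ∈ Ioc (0 : ℝ) 1) : dist a (γ t) = t * L := by
  have hlim : Tendsto (fun s ↦ |s - t| * L) (𝓝[>] 0) (𝓝 (t * L)) :=
    ((by fun_prop : Continuous fun s : ℝ ↦ |s - t| * L).tendsto' 0 _
      (by simp [abs_of_pos ht.1])).mono_left nhdsWithin_le_nhds
  refine tendsto_nhds_unique (ha.dist tendsto_const_nhds) (hlim.congr' ?_)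
  filter_upwards [Ioc_mem_nhdsGT (zero_lt_one' ℝ)] with s hs
  exact (hγ s hs t ht).symm

theorem dist_update_zero_eq {a : X}
    (hγ : ∀ s ∈ Ioc (0 : ℝ) 1, ∀ t ∈ Ioc (0 : ℝ) 1, dist (γ s) (γ t) = |s - t| * L)
    (ha : ∀ t ∈ Ioc (0 : ℝ) 1, dist a (γ t) = t * L) {s t : ℝ} (hs : s ∈ Icc (0 : ℝ) 1)
    (ht : t ∈ Icc (0 : ℝ) 1) :
    dist (Function.update γ 0 a s) (Function.update γ 0 a t) = |s - t| * L := by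
  rcases hs.1.eq_or_lt with rfl | hs0 <;> rcases ht.1.eq_or_lt with rfl | ht0
  · simp
  · simp [ht0.ne', ha t ⟨ht0, ht.2⟩, abs_of_pos ht0]
  · simp [hs0.ne', dist_comm _ a, ha s ⟨hs0, hs.2⟩, abs_of_pos hs0]
  · simp [hs0.ne', ht0.ne', hγ s ⟨hs0, hs.2⟩ t ⟨ht0, ht.2⟩]

end Extension

section Quotient

variable {X : Type*} [MetricSpace X] {A : Set X}

theorem qdist_of_mem_left {x : X} (hx : x ∈ A) (y : X) : qdist A x y = infDist y A := by
  rw [qdist, infDist_zero_of_mem hx, zero_add]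
  exact min_eq_right (dist_comm x y ▸ infDist_le_dist_of_mem hx)

theorem qdist_eq_dist_of_lt {x y : X} (h : qdist A x y < infDist x A + infDist y A) :
    qdist A x y = dist x y :=
  min_eq_left (min_lt_iff.1 h |>.resolve_right (lt_irrefl _)).le

variable {η : ℝ → X}

theorem infDist_eq_of_qdist_geodesic (h0 : η 0 ∈ A)
    (hgeo : ∀ s t : ℝ, s ∈ Icc (0 : ℝ) 1 → t ∈ Icc (0 : ℝ) 1 →
      qdist A (η s) (η t) = |s - t| * qdist A (η 0) (η 1)) {t : ℝ} (ht : t ∈ Icc (0 : ℝ) 1) :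
    infDist (η t) A = t * qdist A (η 0) (η 1) := by
  rw [← qdist_of_mem_left h0, hgeo 0 t ⟨le_rfl, zero_le_one⟩ ht, zero_sub, abs_neg,
    abs_of_nonneg ht.1]

theorem dist_eq_of_qdist_geodesic (h0 : η 0 ∈ A)
    (hgeo : ∀ s t : ℝ, s ∈ Icc (0 : ℝ) 1 → t ∈ Icc (0 : ℝ) 1 →
      qdist A (η s) (η t) = |s - t| * qdist A (η 0) (η 1)) (hL : 0 < qdist A (η 0) (η 1)) {s t : ℝ}
    (hs : s ∈ Ioc (0 : ℝ) 1) (ht : t ∈ Ioc (0 : ℝ) 1) :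
    dist (η s) (η t) = |s - t| * qdist A (η 0) (η 1) := by
  have hgst := hgeo s t (Ioc_subset_Icc_self hs) (Ioc_subset_Icc_self ht)
  rw [← hgst]
  refine (qdist_eq_dist_of_lt ?_).symm
  rw [hgst, infDist_eq_of_qdist_geodesic h0 hgeo (Ioc_subset_Icc_self hs),
    infDist_eq_of_qdist_geodesic h0 hgeo (Ioc_subset_Icc_self ht), ← add_mul]
  exact mul_lt_mul_of_pos_right (abs_sub_lt_iff.2 ⟨by linarith [ht.1], by linarith [hs.1]⟩) hL

theorem IsClosed.mem_of_tendsto_infDist {ι : Type*} {l : Filter ι} [l.NeBot] {f : ι → X}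
    {a : X} (hA : IsClosed A) (hne : A.Nonempty) (ha : Tendsto f l (𝓝 a))
    (hf : Tendsto (fun i ↦ infDist (f i) A) l (𝓝 0)) : a ∈ A :=
  (hA.mem_iff_infDist_zero hne).2 <|
    tendsto_nhds_unique (((continuous_infDist_pt A).tendsto a).comp ha) hf

end Quotient

theorem stmt_14_general {X : Type*} [MetricSpace X] [ProperSpace X] (A : Set X)
    (hAcl : IsClosed A)
    (η : ℝ → X) (h0 : η 0 ∈ A)
    (hgeo : ∀ s t : ℝ, s ∈ Set.Icc (0:ℝ) 1 → t ∈ Set.Icc (0:ℝ) 1 →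
      qdist A (η s) (η t) = |s - t| * qdist A (η 0) (η 1)) :
    ∃ η' : ℝ → X, η' 0 ∈ A ∧
      (∀ t : ℝ, 0 < t → t ≤ 1 → (η' t = η t ∨ (η' t ∈ A ∧ η t ∈ A))) ∧
      ∀ s t : ℝ, s ∈ Set.Icc (0:ℝ) 1 → t ∈ Set.Icc (0:ℝ) 1 →
        dist (η' s) (η' t) = |s - t| * qdist A (η 0) (η 1) := by
  set L := qdist A (η 0) (η 1)
  have hinf {t : ℝ} (ht : t ∈ Icc (0 : ℝ) 1) : infDist (η t) A = t * L :=
    infDist_eq_of_qdist_geodesic h0 hgeo ht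
  have hL_nonneg : 0 ≤ L := by
    simpa [hinf ⟨zero_le_one, le_rfl⟩] using infDist_nonneg (x := η 1) (s := A)
  rcases hL_nonneg.eq_or_lt with hL0 | hLpos
  · refine ⟨fun _ ↦ η 0, h0, fun t ht ht1 ↦ .inr ⟨h0, ?_⟩, fun s t _ _ ↦ by simp [← hL0]⟩
    rw [hAcl.mem_iff_infDist_zero ⟨_, h0⟩, hinf ⟨ht.le, ht1⟩, ← hL0, mul_zero]
  have hd : ∀ s ∈ Ioc (0 : ℝ) 1, ∀ t ∈ Ioc (0 : ℝ) 1, dist (η s) (η t) = |s - t| * L :=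
    fun s hs t ht ↦ dist_eq_of_qdist_geodesic h0 hgeo hLpos hs ht
  obtain ⟨a, ha⟩ := exists_tendsto_nhdsGT_zero_of_dist_eq hLpos.le hd
  refine ⟨Function.update η 0 a, ?_, fun t ht _ ↦ .inl (Function.update_of_ne ht.ne' ..),
    fun s t hs ht ↦ dist_update_zero_eq hd (fun t ↦ dist_eq_of_tendsto_nhdsGT_zero ha hd) hs ht⟩
  rw [Function.update_self]
  refine hAcl.mem_of_tendsto_infDist ⟨_, h0⟩ ha ?_
  have hlin : Tendsto (fun t : ℝ ↦ t * L) (𝓝[>] 0) (𝓝 0) :=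
    ((continuous_mul_const L).tendsto' 0 0 (zero_mul L)).mono_left nhdsWithin_le_nhds
  refine hlin.congr' ?_
  filter_upwards [Ioc_mem_nhdsGT (zero_lt_one' ℝ)] with t ht
  exact (hinf (Ioc_subset_Icc_self ht)).symm

/-- In a proper metric space `X` with nonempty closed `A ⊆ X`, any constant-speed geodesic
in the quotient `X/A` starting at the collapsed point `A` lifts to a constant-speed geodesic
in `X` starting at a point of `A` and projecting to the original geodesic. -/
theorem stmt_14 {X : Type*} [MetricSpace X] [ProperSpace X] (A : Set X)
    (hA : A.Nonempty) (hAcl : IsClosed A)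
    (η : ℝ → X) (h0 : η 0 ∈ A)
    (hgeo : ∀ s t : ℝ, s ∈ Set.Icc (0:ℝ) 1 → t ∈ Set.Icc (0:ℝ) 1 →
      qdist A (η s) (η t) = |s - t| * qdist A (η 0) (η 1)) :
    ∃ η' : ℝ → X, η' 0 ∈ A ∧
      (∀ t : ℝ, 0 < t → t ≤ 1 → (η' t = η t ∨ (η' t ∈ A ∧ η t ∈ A))) ∧
      ∀ s t : ℝ, s ∈ Set.Icc (0:ℝ) 1 → t ∈ Set.Icc (0:ℝ) 1 →
        dist (η' s) (η' t) = |s - t| * qdist A (η 0) (η 1) :=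
  stmt_14_general A hAcl η h0 hgeo
end
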